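/- Let P, Q, P̃, Q̃ be probability measures with P ≪ μ etc., and let β, β' be real numbers with β ≠ β'. For any estimator β̃ (a measurable real-valued function), the Hellinger affinity ρ(P,Q) = ∫ √(dP dQ) satisfies ρ(P,Q) ≤ (∫ ((β̃−β)²/(β−β')²) dP)^{1/2} + (∫ ((β̃−β')²/(β−β')²) dQ)^{1/2}, and consequently (1/2)(β−β')² ρ²(P,Q) ≤ ∫ (β̃−β)² dP + ∫ (β̃−β')² dQ. -/

import Mathlib

open MeasureTheory Real

/-!
Write `h = (β̃ - β)/(β - β')` and `h' = (β̃ - β')/(β - β')`. Since `h' - h = 1`, pointwise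
`√(pq) ≤ |h| √(pq) + |h'| √(pq) = √(h² p · q) + √(h'² q · p)`, and Cauchy–Schwarz in the form
`∫ √(FG) ≤ √(∫ F) √(∫ G)` bounds the two integrals by `√(∫ h² p)` and `√(∫ h'² q)`.
Squaring with `(a + b)² ≤ 2a² + 2b²` gives the second inequality.
-/

namespace MeasureTheory

variable {α : Type*} [MeasurableSpace α] {μ : Measure α} {F G : α → ℝ}

theorem memLp_two_sqrt (hF0 : 0 ≤ᵐ[μ] F) (hF : Integrable F μ) :
    MemLp (fun x => √(F x)) 2 μ := by
  refine (memLp_two_iff_integrable_sq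
    (continuous_sqrt.comp_aestronglyMeasurable hF.aestronglyMeasurable)).mpr ?_
  refine hF.congr ?_
  filter_upwards [hF0] with x hx
  exact (sq_sqrt hx).symm

theorem sqrt_mul_ae_eq (hF0 : 0 ≤ᵐ[μ] F) :
    (fun x => √(F x * G x)) =ᵐ[μ] (fun x => √(F x)) * fun x => √(G x) := by
  filter_upwards [hF0] with x hx
  exact sqrt_mul hx _

theorem Integrable.sqrt_mul (hF0 : 0 ≤ᵐ[μ] F) (hG0 : 0 ≤ᵐ[μ] G) (hF : Integrable F μ)
    (hG : Integrable G μ) : Integrable (fun x => √(F x * G x)) μ :=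
  ((memLp_two_sqrt hF0 hF).integrable_mul (memLp_two_sqrt hG0 hG)).congr
    (sqrt_mul_ae_eq hF0).symm

theorem integral_sqrt_mul_le (hF0 : 0 ≤ᵐ[μ] F) (hG0 : 0 ≤ᵐ[μ] G) (hF : Integrable F μ)
    (hG : Integrable G μ) :
    ∫ x, √(F x * G x) ∂μ ≤ √(∫ x, F x ∂μ) * √(∫ x, G x ∂μ) := by
  have hsqrt_sq {H : α → ℝ} (hH0 : 0 ≤ᵐ[μ] H) : ∫ x, √(H x) ^ (2 : ℝ) ∂μ = ∫ x, H x ∂μ := by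
    refine integral_congr_ae ?_
    filter_upwards [hH0] with x hx
    rw [rpow_two, sq_sqrt hx]
  have holder := integral_mul_le_Lp_mul_Lq_of_nonneg HolderConjugate.two_two
    (ae_of_all μ fun x => sqrt_nonneg (F x)) (ae_of_all μ fun x => sqrt_nonneg (G x))
    (by simpa using memLp_two_sqrt hF0 hF) (by simpa using memLp_two_sqrt hG0 hG)
  rw [hsqrt_sq hF0, hsqrt_sq hG0, ← sqrt_eq_rpow, ← sqrt_eq_rpow] at holder
  rwa [integral_congr_ae (sqrt_mul_ae_eq hF0)]

theorem integral_sqrt_mul_le_of_one_le_abs_add_abs {p q h h' : α → ℝ} (hp0 : ∀ x, 0 ≤ p x)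
    (hq0 : ∀ x, 0 ≤ q x) (hp : Integrable p μ) (hq : Integrable q μ)
    (hhp : Integrable (fun x => h x ^ 2 * p x) μ) (hh'q : Integrable (fun x => h' x ^ 2 * q x) μ)
    (hone : ∀ x, 1 ≤ |h x| + |h' x|) :
    ∫ x, √(p x * q x) ∂μ ≤
      √(∫ x, h x ^ 2 * p x ∂μ) * √(∫ x, q x ∂μ) + √(∫ x, h' x ^ 2 * q x ∂μ) * √(∫ x, p x ∂μ) := by
  have hhp0 : 0 ≤ᵐ[μ] fun x => h x ^ 2 * p x := ae_of_all μ fun x => by positivity [hp0 x]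
  have hh'q0 : 0 ≤ᵐ[μ] fun x => h' x ^ 2 * q x := ae_of_all μ fun x => by positivity [hq0 x]
  have hpointwise (x : α) :
      √(p x * q x) ≤ √(h x ^ 2 * p x * q x) + √(h' x ^ 2 * q x * p x) := by
    rw [mul_assoc, mul_assoc, sqrt_mul (sq_nonneg _), sqrt_mul (sq_nonneg _), sqrt_sq_eq_abs,
      sqrt_sq_eq_abs, mul_comm (q x), ← add_mul]
    exact le_mul_of_one_le_left (sqrt_nonneg _) (hone x)
  have hI := Integrable.sqrt_mul hhp0 (ae_of_all μ hq0) hhp hq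
  have hI' := Integrable.sqrt_mul hh'q0 (ae_of_all μ hp0) hh'q hp
  calc ∫ x, √(p x * q x) ∂μ
      ≤ ∫ x, (√(h x ^ 2 * p x * q x) + √(h' x ^ 2 * q x * p x)) ∂μ :=
        integral_mono_of_nonneg (ae_of_all μ fun x => sqrt_nonneg _) (hI.add hI')
          (ae_of_all μ hpointwise)
    _ = ∫ x, √(h x ^ 2 * p x * q x) ∂μ + ∫ x, √(h' x ^ 2 * q x * p x) ∂μ := integral_add hI hI'
    _ ≤ _ := add_le_add (integral_sqrt_mul_le hhp0 (ae_of_all μ hq0) hhp hq)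
        (integral_sqrt_mul_le hh'q0 (ae_of_all μ hp0) hh'q hp)

end MeasureTheory

theorem sq_le_two_mul_add_of_le_sqrt_add_sqrt {r a b : ℝ} (hr : 0 ≤ r) (ha : 0 ≤ a) (hb : 0 ≤ b)
    (h : r ≤ √a + √b) : r ^ 2 ≤ 2 * (a + b) :=
  calc r ^ 2 ≤ (√a + √b) ^ 2 := pow_le_pow_left₀ hr h 2
    _ ≤ 2 * (√a ^ 2 + √b ^ 2) := add_sq_le
    _ = 2 * (a + b) := by rw [sq_sqrt ha, sq_sqrt hb]

theorem hellinger_affinity_two_point_bound_general {α : Type*} [MeasurableSpace α]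
    (μ : Measure α)
    (p q : α → ℝ)
    (hp0 : ∀ x, 0 ≤ p x) (hq0 : ∀ x, 0 ≤ q x)
    (hpInt : Integrable p μ) (hqInt : Integrable q μ)
    (hp1 : (∫ x, p x ∂μ) = 1) (hq1 : (∫ x, q x ∂μ) = 1)
    (β β' : ℝ) (hne : β ≠ β')
    (betaTilde : α → ℝ)
    (hInt1 : Integrable (fun x => (betaTilde x - β) ^ 2 * p x) μ)
    (hInt2 : Integrable (fun x => (betaTilde x - β') ^ 2 * q x) μ) :
    (∫ x, Real.sqrt (p x * q x) ∂μ) ≤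
        Real.sqrt (∫ x, (betaTilde x - β) ^ 2 / (β - β') ^ 2 * p x ∂μ) +
          Real.sqrt (∫ x, (betaTilde x - β') ^ 2 / (β - β') ^ 2 * q x ∂μ) ∧
      (1 / 2) * (β - β') ^ 2 * (∫ x, Real.sqrt (p x * q x) ∂μ) ^ 2 ≤
        (∫ x, (betaTilde x - β) ^ 2 * p x ∂μ) +
          ∫ x, (betaTilde x - β') ^ 2 * q x ∂μ := by
  have hd : β - β' ≠ 0 := sub_ne_zero.mpr hne
  have hone (x : α) :
      1 ≤ |(betaTilde x - β) / (β - β')| + |(betaTilde x - β') / (β - β')| := by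
    have hdiff : (betaTilde x - β') / (β - β') - (betaTilde x - β) / (β - β') = 1 := by
      field_simp
      ring
    simpa [hdiff, add_comm] using abs_sub ((betaTilde x - β') / (β - β'))
      ((betaTilde x - β) / (β - β'))
  have hscaled {r : ℝ} {f : α → ℝ} (hf : Integrable (fun x => (betaTilde x - r) ^ 2 * f x) μ) :
      Integrable (fun x => ((betaTilde x - r) / (β - β')) ^ 2 * f x) μ := by
    simpa only [div_pow, div_mul_eq_mul_div] using hf.div_const ((β - β') ^ 2)
  have haffinity := integral_sqrt_mul_le_of_one_le_abs_add_abs hp0 hq0 hpInt hqInt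
    (hscaled hInt1) (hscaled hInt2) hone
  simp only [hp1, hq1, sqrt_one, mul_one, div_pow] at haffinity
  refine ⟨haffinity, ?_⟩
  have hρ := sq_le_two_mul_add_of_le_sqrt_add_sqrt
    (integral_nonneg fun x => sqrt_nonneg _)
    (integral_nonneg fun x => by positivity [hp0 x]) (integral_nonneg fun x => by positivity [hq0 x])
    haffinity
  simp only [div_mul_eq_mul_div, integral_div] at hρ
  calc 1 / 2 * (β - β') ^ 2 * (∫ x, √(p x * q x) ∂μ) ^ 2
      ≤ 1 / 2 * (β - β') ^ 2 * (2 * ((∫ x, (betaTilde x - β) ^ 2 * p x ∂μ) / (β - β') ^ 2 +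
          (∫ x, (betaTilde x - β') ^ 2 * q x ∂μ) / (β - β') ^ 2)) := by gcongr
    _ = _ := by field_simp

/-- Hellinger-affinity two-point risk bound: for probability densities `p, q`
w.r.t. `μ`, distinct reals `β ≠ β'` and any estimator `β̃`,
`ρ(P,Q) ≤ (∫ (β̃−β)²/(β−β')² dP)^{1/2} + (∫ (β̃−β')²/(β−β')² dQ)^{1/2}`, and
consequently `(1/2)(β−β')² ρ²(P,Q) ≤ ∫ (β̃−β)² dP + ∫ (β̃−β')² dQ`. -/
theorem hellinger_affinity_two_point_bound {α : Type*} [MeasurableSpace α]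
    (μ : Measure α) [SigmaFinite μ]
    (p q : α → ℝ) (hp : Measurable p) (hq : Measurable q)
    (hp0 : ∀ x, 0 ≤ p x) (hq0 : ∀ x, 0 ≤ q x)
    (hpInt : Integrable p μ) (hqInt : Integrable q μ)
    (hp1 : (∫ x, p x ∂μ) = 1) (hq1 : (∫ x, q x ∂μ) = 1)
    (β β' : ℝ) (hne : β ≠ β')
    (betaTilde : α → ℝ) (hβt : Measurable betaTilde)
    (hInt1 : Integrable (fun x => (betaTilde x - β) ^ 2 * p x) μ)
    (hInt2 : Integrable (fun x => (betaTilde x - β') ^ 2 * q x) μ) :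
    (∫ x, Real.sqrt (p x * q x) ∂μ) ≤
        Real.sqrt (∫ x, (betaTilde x - β) ^ 2 / (β - β') ^ 2 * p x ∂μ) +
          Real.sqrt (∫ x, (betaTilde x - β') ^ 2 / (β - β') ^ 2 * q x ∂μ) ∧
      (1 / 2) * (β - β') ^ 2 * (∫ x, Real.sqrt (p x * q x) ∂μ) ^ 2 ≤
        (∫ x, (betaTilde x - β) ^ 2 * p x ∂μ) +
          ∫ x, (betaTilde x - β') ^ 2 * q x ∂μ :=
  hellinger_affinity_two_point_bound_general μ p q hp0 hq0 hpInt hqInt hp1 hq1 β β' hne betaTilde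
    hInt1 hInt2
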